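/- Let q be a complex number with |q| < 1. For every integer n ≥ 0, the series ∑_{λ ∈ STR, ℓ(λ) = n} q^{|λ|_1} over all strict partitions with exactly n parts converges absolutely and equals c^{(1)}_n(q)/(q^3;q^3)_n, where c^{(1)}_n is the polynomial sequence defined in the context with i = 1. -/

import Mathlib

/-- A strict partition: a strictly decreasing list of positive integers
(the empty partition is allowed). -/
structure StrictPartition where
  parts : List ℕ
  sorted : parts.Pairwise (· > ·)
  pos : ∀ p ∈ parts, 0 < p

namespace StrictPartition

/-- The number of parts (rows) of a strict partition. -/
def length (l : StrictPartition) : ℕ := l.parts.length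

/-- The number of boxes `(j+1, k)` with `1 ≤ k ≤ p` in row `j+1` (`j` is 0-indexed)
whose residue `k - (j+1)` is congruent to `i` modulo `2`. -/
def rowResidueCount (i j p : ℕ) : ℕ :=
  ((Finset.Icc 1 p).filter fun k => (k + j + 1 + i) % 2 = 0).card

/-- `|λ|_i`: the number of boxes of `λ`, counting twice each box whose residue
`(column) - (row)` is congruent to `i` modulo `2`. -/
def wt (i : ℕ) (l : StrictPartition) : ℕ :=
  l.parts.sum + ∑ j ∈ Finset.range l.parts.length, rowResidueCount i j (l.parts.getD j 0)

end StrictPartition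


/-!
Removing the first column of a strict partition with `n + 1` rows leaves one with `n + 1` or
`n` rows, according to whether `1` is a part, and exchanges the two residue classes. Hence
`S_i(n) = ∑_{ℓ(λ)=n} q^{|λ|_i}` satisfy
`S_1(n+1) = q^{⌊(3n+3)/2⌋} (S_2(n+1) + S_2(n))` and
`S_2(n+1) = q^{⌊(3n+4)/2⌋} (S_1(n+1) + S_1(n))`.
Solving this for `S_1(n+1)`, `S_2(n+1)` and multiplying by `(q³;q³)_{n+1}` gives a first-order
coupled system for `F = S_1 · (q³;q³)_n` and `G = S_2 · (q³;q³)_n`; eliminating `G` yields the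
recurrence of `c^{(1)}`, and both sequences start with `1, q + q³`.
-/

theorem summable_pow_sum {r : ℝ} (h0 : 0 ≤ r) (h1 : r < 1) (n : ℕ) :
    Summable (fun v : Fin n → ℕ => r ^ ∑ j, v j) := by
  induction n with
  | zero => exact (hasSum_fintype _).summable
  | succ n ih =>
    have hprod : Summable (fun x : ℕ × (Fin n → ℕ) => r ^ x.1 * r ^ ∑ j, x.2 j) :=
      Summable.mul_of_nonneg (f := fun k : ℕ => r ^ k)
        (g := fun v : Fin n → ℕ => r ^ ∑ j, v j) (summable_geometric_of_lt_one h0 h1) ih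
        (fun k => pow_nonneg h0 k) (fun _ => pow_nonneg h0 _)
    refine ((Fin.consEquiv fun _ => ℕ).symm.summable_iff.2 hprod).congr fun v => ?_
    rw [Function.comp_apply, Fin.consEquiv_symm_apply, Fin.sum_univ_succ, pow_add]
    rfl

theorem List.filter_pos_append_zero {m : List ℕ} (hm : m.Pairwise (· > ·)) (h0 : 0 ∈ m) :
    m.filter (0 < ·) ++ [0] = m := by
  induction m with
  | nil => simp at h0
  | cons a t ih =>
    rw [List.pairwise_cons] at hm
    rcases Nat.eq_zero_or_pos a with rfl | ha
    · have : t = [] := List.eq_nil_iff_forall_not_mem.2 fun b hb => by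
        have := hm.1 b hb; omega
      simp [this]
    · have ht : 0 ∈ t := (List.mem_cons.1 h0).resolve_left ha.ne
      simp [ha, ih hm.2 ht]

def qPochhammer {R : Type*} [CommRing R] (a q : R) (n : ℕ) : R :=
  ∏ j ∈ Finset.range n, (1 - a * q ^ j)

theorem qPochhammer_succ {R : Type*} [CommRing R] (a q : R) (n : ℕ) :
    qPochhammer a q (n + 1) = qPochhammer a q n * (1 - a * q ^ n) :=
  Finset.prod_range_succ _ _

theorem qPochhammer_ne_zero {K : Type*} [NormedField K] {a q : K} (ha : ‖a‖ < 1)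
    (hq : ‖q‖ ≤ 1) (n : ℕ) : qPochhammer a q n ≠ 0 := by
  refine Finset.prod_ne_zero_iff.2 fun j _ => sub_ne_zero.2 fun h => ?_
  have : ‖a * q ^ j‖ < 1 := by
    rw [norm_mul, norm_pow]
    exact (mul_le_of_le_one_right (norm_nonneg a) (pow_le_one₀ (norm_nonneg q) hq)).trans_lt ha
  rw [← h, norm_one] at this
  exact this.false

section Recurrence

variable {R : Type*} [CommRing R]

def SolvesRecurrence (x : R) (u : ℤ → R) : Prop :=
  ∀ n : ℕ, u ((n : ℤ) + 2) =
    -x ^ (3 * n + 3) * (1 - x ^ 3) * u ((n : ℤ) + 1)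
    + x ^ (3 * n + 4) * (1 + x + 2 * x ^ (3 * n + 2)) * u (n : ℤ)
    - x ^ (6 * n + 3) * (1 - x ^ 3) * (1 - x ^ (3 * n)) * u ((n : ℤ) - 1)
    - x ^ (6 * n + 3) * (1 - x ^ (3 * n)) * (1 - x ^ (3 * n - 3)) * u ((n : ℤ) - 2)

theorem SolvesRecurrence.map {S F : Type*} [CommRing S] [FunLike F R S] [RingHomClass F R S]
    (f : F) {x : R} {u : ℤ → R} (h : SolvesRecurrence x u) : SolvesRecurrence (f x) (f ∘ u) :=
  fun n => by simpa [map_ofNat] using congrArg f (h n)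

/-- The values at `-1` and `-2` never matter: their coefficients vanish for `n = 0, 1`. -/
theorem SolvesRecurrence.eq_of_initial_eq {x : R} {u w : ℤ → R} (hu : SolvesRecurrence x u)
    (hw : SolvesRecurrence x w) (h0 : u 0 = w 0) (h1 : u 1 = w 1) (n : ℕ) : u n = w n := by
  induction n using Nat.strong_induction_on with
  | _ n ih =>
    match n with
    | 0 => simpa using h0
    | 1 => simpa using h1
    | n + 2 =>
      have hsucc : u ((n : ℤ) + 1) = w ((n : ℤ) + 1) := by exact_mod_cast ih (n + 1) (by omega)
      have hpred :
          (1 - x ^ (3 * n)) * u ((n : ℤ) - 1) = (1 - x ^ (3 * n)) * w ((n : ℤ) - 1) := by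
        rcases n with _ | n
        · simp
        · rw [show ((n + 1 : ℕ) : ℤ) - 1 = n by push_cast; ring, ih n (by omega)]
      have hpred2 : (1 - x ^ (3 * n)) * (1 - x ^ (3 * n - 3)) * u ((n : ℤ) - 2) =
          (1 - x ^ (3 * n)) * (1 - x ^ (3 * n - 3)) * w ((n : ℤ) - 2) := by
        rcases n with _ | _ | n
        · simp
        · simp
        · rw [show ((n + 2 : ℕ) : ℤ) - 2 = n by push_cast; ring, ih n (by omega)]
      push_cast
      rw [hu n, hw n, hsucc, ih n (by omega)]
      linear_combination (-x ^ (6 * n + 3) * (1 - x ^ 3)) * hpred - x ^ (6 * n + 3) * hpred2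

end Recurrence

section Coupled

variable {R : Type*} [CommRing R] {x : R} {F G : ℕ → R}

/-- Eliminating `G` from the coupled system: after splitting by the parity of `n`, all the
floor exponents become explicit and the identity is a polynomial one. -/
theorem fourth_order_of_coupled
    (hF : ∀ k, F (k + 1) = x ^ (3 * k + 3) * F k + x ^ ((3 * k + 3) / 2) * G k)
    (hG : ∀ k, G (k + 1) = x ^ (3 * k + 3) * G k + x ^ ((3 * k + 4) / 2) * F k) (n : ℕ) :
    F (n + 4) = -x ^ (3 * n + 9) * (1 - x ^ 3) * F (n + 3)
      + x ^ (3 * n + 10) * (1 + x + 2 * x ^ (3 * n + 8)) * F (n + 2)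
      - x ^ (6 * n + 15) * (1 - x ^ 3) * (1 - x ^ (3 * n + 6)) * F (n + 1)
      - x ^ (6 * n + 15) * (1 - x ^ (3 * n + 6)) * (1 - x ^ (3 * n + 3)) * F n := by
  have stepF : ∀ {k a b}, 3 * k + 3 = a → (3 * k + 3) / 2 = b →
      F (k + 1) = x ^ a * F k + x ^ b * G k := by
    rintro k _ _ rfl rfl; exact hF k
  have stepG : ∀ {k a b}, 3 * k + 3 = a → (3 * k + 4) / 2 = b →
      G (k + 1) = x ^ a * G k + x ^ b * F k := by
    rintro k _ _ rfl rfl; exact hG k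
  obtain ⟨m, rfl | rfl⟩ := Nat.even_or_odd' n
  · rw [stepF (k := 2 * m + 3) (a := 6 * m + 12) (b := 3 * m + 6) (by ring) (by omega),
      stepF (k := 2 * m + 2) (a := 6 * m + 9) (b := 3 * m + 4) (by ring) (by omega),
      stepG (k := 2 * m + 2) (a := 6 * m + 9) (b := 3 * m + 5) (by ring) (by omega),
      stepF (k := 2 * m + 1) (a := 6 * m + 6) (b := 3 * m + 3) (by ring) (by omega),
      stepG (k := 2 * m + 1) (a := 6 * m + 6) (b := 3 * m + 3) (by ring) (by omega),
      stepF (k := 2 * m) (a := 6 * m + 3) (b := 3 * m + 1) (by ring) (by omega),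
      stepG (k := 2 * m) (a := 6 * m + 3) (b := 3 * m + 2) (by ring) (by omega)]
    ring
  · rw [stepF (k := 2 * m + 4) (a := 6 * m + 15) (b := 3 * m + 7) (by ring) (by omega),
      stepF (k := 2 * m + 3) (a := 6 * m + 12) (b := 3 * m + 6) (by ring) (by omega),
      stepG (k := 2 * m + 3) (a := 6 * m + 12) (b := 3 * m + 6) (by ring) (by omega),
      stepF (k := 2 * m + 2) (a := 6 * m + 9) (b := 3 * m + 4) (by ring) (by omega),
      stepG (k := 2 * m + 2) (a := 6 * m + 9) (b := 3 * m + 5) (by ring) (by omega),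
      stepF (k := 2 * m + 1) (a := 6 * m + 6) (b := 3 * m + 3) (by ring) (by omega),
      stepG (k := 2 * m + 1) (a := 6 * m + 6) (b := 3 * m + 3) (by ring) (by omega)]
    ring

theorem solvesRecurrence_of_coupled
    (hF : ∀ k, F (k + 1) = x ^ (3 * k + 3) * F k + x ^ ((3 * k + 3) / 2) * G k)
    (hG : ∀ k, G (k + 1) = x ^ (3 * k + 3) * G k + x ^ ((3 * k + 4) / 2) * F k)
    (h0 : F 0 = G 0) : SolvesRecurrence x (fun k => F k.toNat) := by
  intro n
  simp only [show ((n : ℤ) + 2).toNat = n + 2 by omega,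
    show ((n : ℤ) + 1).toNat = n + 1 by omega, show ((n : ℤ) - 1).toNat = n - 1 by omega,
    show ((n : ℤ) - 2).toNat = n - 2 by omega, Int.toNat_natCast]
  rcases n with _ | _ | n
  · simp [hF, hG, ← h0]
    ring
  · simp [hF, hG, ← h0]
    ring
  · rw [show 3 * (n + 2) - 3 = 3 * n + 3 by omega, show n + 2 - 1 = n + 1 from rfl,
      show n + 2 - 2 = n from rfl]
    linear_combination fourth_order_of_coupled hF hG n

end Coupled

namespace StrictPartition

theorem ext_parts {μ ν : StrictPartition} (h : μ.parts = ν.parts) : μ = ν := by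
  cases μ; cases ν; simpa using h

theorem rowResidueCount_eq (i j p : ℕ) :
    rowResidueCount i j p = (p + (j + i + 1) % 2) / 2 := by
  induction p with
  | zero => simp [rowResidueCount]
  | succ p ih =>
    rw [rowResidueCount, ← Finset.insert_Icc_right_eq_Icc_add_one (by omega),
      Finset.filter_insert]
    rw [rowResidueCount] at ih
    split_ifs
    · rw [Finset.card_insert_of_notMem (by simp)]
      omega
    · omega

def weight (i : ℕ) (l : List ℕ) : ℕ :=
  l.sum + ∑ j ∈ Finset.range l.length, rowResidueCount i j (l.getD j 0)

theorem wt_eq_weight (i : ℕ) (p : StrictPartition) : p.wt i = weight i p.parts := rfl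

@[simp] theorem weight_nil (i : ℕ) : weight i [] = 0 := by simp [weight]

theorem weight_cons (i a : ℕ) (l : List ℕ) :
    weight i (a :: l) = a + rowResidueCount i 0 a + weight (i + 1) l := by
  have shift : ∀ j p, rowResidueCount i (j + 1) p = rowResidueCount (i + 1) j p := by
    intro j p; simp only [rowResidueCount_eq]; omega
  simp only [weight, List.sum_cons, List.length_cons, Finset.sum_range_succ',
    List.getD_cons_succ, List.getD_cons_zero, shift]
  ring

theorem weight_add_two (i : ℕ) (l : List ℕ) : weight (i + 2) l = weight i l := by
  induction l generalizing i with
  | nil => simp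
  | cons a l ih =>
    rw [weight_cons, weight_cons, ih, rowResidueCount_eq, rowResidueCount_eq]
    omega

theorem weight_append_zero (i : ℕ) (l : List ℕ) : weight i (l ++ [0]) = weight i l := by
  induction l generalizing i with
  | nil => simp [weight_cons, rowResidueCount_eq]
  | cons a l ih => rw [List.cons_append, weight_cons, weight_cons, ih]

/-- A new first column of length `ℓ` swaps the two residue classes and contributes
`ℓ + ⌊ℓ/2⌋` (odd `i`) or `ℓ + ⌈ℓ/2⌉` (even `i`). -/
theorem weight_map_succ (i : ℕ) (l : List ℕ) :
    weight i (l.map (· + 1)) = weight (i + 1) l + (3 * l.length + (i + 1) % 2) / 2 := by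
  induction l generalizing i with
  | nil => simp
  | cons a l ih =>
    rw [List.map_cons, weight_cons, weight_cons, ih, rowResidueCount_eq, rowResidueCount_eq,
      List.length_cons]
    omega

theorem pairwise_append_zero (p : StrictPartition) : (p.parts ++ [0]).Pairwise (· > ·) :=
  List.pairwise_append.2 ⟨p.sorted, by simp, fun a ha _ hb => by
    rw [List.mem_singleton.1 hb]; exact p.pos a ha⟩

def mapSucc (l : List ℕ) (h : l.Pairwise (· > ·)) : StrictPartition where
  parts := l.map (· + 1)
  sorted := List.pairwise_map.2 (h.imp (by omega))
  pos := by simp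

def addCol (p : StrictPartition) : StrictPartition := mapSucc p.parts p.sorted

/-- The appended zero row becomes a new last part `1`. -/
def addColOne (p : StrictPartition) : StrictPartition :=
  mapSucc (p.parts ++ [0]) p.pairwise_append_zero

theorem pairwise_map_pred (p : StrictPartition) : (p.parts.map (· - 1)).Pairwise (· > ·) := by
  refine List.pairwise_map.2 (p.sorted.imp_of_mem fun {a b} _ hb hab => ?_)
  have := p.pos b hb
  omega

def removeCol (p : StrictPartition) : StrictPartition where
  parts := (p.parts.map (· - 1)).filter (0 < ·)
  sorted := p.pairwise_map_pred.filter _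
  pos := by simp

@[simp] theorem length_addCol (p : StrictPartition) : p.addCol.length = p.length := by
  simp [addCol, mapSucc, length]

@[simp] theorem length_addColOne (p : StrictPartition) : p.addColOne.length = p.length + 1 := by
  simp [addColOne, mapSucc, length]

theorem wt_addCol (i : ℕ) (p : StrictPartition) :
    p.addCol.wt i = p.wt (i + 1) + (3 * p.length + (i + 1) % 2) / 2 :=
  weight_map_succ i p.parts

theorem wt_addColOne (i : ℕ) (p : StrictPartition) :
    p.addColOne.wt i = p.wt (i + 1) + (3 * (p.length + 1) + (i + 1) % 2) / 2 := by
  rw [addColOne, wt_eq_weight, mapSucc, weight_map_succ, weight_append_zero, List.length_append]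
  rfl

theorem one_notMem_addCol (p : StrictPartition) : 1 ∉ p.addCol.parts := by
  simp only [addCol, mapSucc, List.mem_map, not_exists, not_and]
  intro a ha
  have := p.pos a ha
  omega

theorem one_mem_addColOne (p : StrictPartition) : 1 ∈ p.addColOne.parts := by
  simp [addColOne, mapSucc]

theorem removeCol_mapSucc (l : List ℕ) (h : l.Pairwise (· > ·)) :
    (mapSucc l h).removeCol.parts = l.filter (0 < ·) := by
  simp [removeCol, mapSucc, Function.comp_def]

theorem removeCol_addCol (p : StrictPartition) : p.addCol.removeCol = p := by
  refine ext_parts ?_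
  rw [addCol, removeCol_mapSucc, List.filter_eq_self]
  simpa using p.pos

theorem removeCol_addColOne (p : StrictPartition) : p.addColOne.removeCol = p := by
  refine ext_parts ?_
  rw [addColOne, removeCol_mapSucc, List.filter_append,
    List.filter_eq_self.2 (by simpa using p.pos)]
  simp

theorem map_pred_map_succ (p : StrictPartition) :
    (p.parts.map (· - 1)).map (· + 1) = p.parts := by
  rw [List.map_map]
  refine (List.map_congr_left fun a ha => ?_).trans (List.map_id _)
  have := p.pos a ha
  simp only [Function.comp_apply, id_eq]
  omega

theorem addCol_removeCol {p : StrictPartition} (h : 1 ∉ p.parts) : p.removeCol.addCol = p := by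
  refine ext_parts ?_
  rw [← map_pred_map_succ p]
  simp only [addCol, mapSucc, removeCol]
  congr 1
  refine List.filter_eq_self.2 fun a ha => ?_
  obtain ⟨b, hb, rfl⟩ := List.mem_map.1 ha
  have := p.pos b hb
  have : b ≠ 1 := fun e => h (e ▸ hb)
  simp only [decide_eq_true_eq]
  omega

theorem addColOne_removeCol {p : StrictPartition} (h : 1 ∈ p.parts) :
    p.removeCol.addColOne = p := by
  refine ext_parts ?_
  rw [← map_pred_map_succ p]
  simp only [addColOne, mapSucc, removeCol]
  congr 1
  exact List.filter_pos_append_zero p.pairwise_map_pred (List.mem_map.2 ⟨1, h, rfl⟩)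

/-- Removing the first column: a strict partition with `n + 1` rows either has no part `1`
(and stays of length `n + 1`) or has last part `1` (and loses a row). -/
def columnEquiv (n : ℕ) :
    {p : StrictPartition // p.length = n + 1} ⊕ {p : StrictPartition // p.length = n} ≃
      {p : StrictPartition // p.length = n + 1} where
  toFun := Sum.elim (fun p => ⟨p.1.addCol, by simp [p.2]⟩)
    (fun p => ⟨p.1.addColOne, by simp [p.2]⟩)
  invFun p :=
    if h : 1 ∈ p.1.parts then
      .inr ⟨p.1.removeCol, by
        have := congrArg length (addColOne_removeCol h)
        rw [length_addColOne, p.2] at this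
        omega⟩
    else
      .inl ⟨p.1.removeCol, by rw [← length_addCol, addCol_removeCol h, p.2]⟩
  left_inv := by
    rintro (p | p)
    · simp [one_notMem_addCol, removeCol_addCol]
    · simp [one_mem_addColOne, removeCol_addColOne]
  right_inv := by
    rintro ⟨p, _⟩
    by_cases h : 1 ∈ p.parts
    · simp [h, addColOne_removeCol h]
    · simp [h, addCol_removeCol h]

theorem summable_norm_pow_wt {q : ℂ} (hq : ‖q‖ < 1) (i n : ℕ) :
    Summable (fun p : {p : StrictPartition // p.length = n} => ‖q ^ p.1.wt i‖) := by
  have hvec : Summable (fun v : List.Vector ℕ n => ‖q‖ ^ v.toList.sum) := by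
    refine (Equiv.vectorEquivFin ℕ n).symm.summable_iff.1 ?_
    refine (summable_pow_sum (norm_nonneg q) hq n).congr fun v => ?_
    simp [Equiv.vectorEquivFin, List.sum_ofFn]
  have hinj : Function.Injective
      fun p : {p : StrictPartition // p.length = n} => (⟨p.1.parts, p.2⟩ : List.Vector ℕ n) :=
    fun p p' h => Subtype.ext (ext_parts (congrArg Subtype.val h))
  refine (hvec.comp_injective hinj).of_nonneg_of_le (fun _ => norm_nonneg _) fun p => ?_
  rw [norm_pow]
  exact pow_le_pow_of_le_one (norm_nonneg q) hq.le (Nat.le_add_right _ _)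

noncomputable def genFun (q : ℂ) (i n : ℕ) : ℂ :=
  ∑' p : {p : StrictPartition // p.length = n}, q ^ p.1.wt i

theorem hasSum_genFun {q : ℂ} (hq : ‖q‖ < 1) (i n : ℕ) :
    HasSum (fun p : {p : StrictPartition // p.length = n} => q ^ p.1.wt i) (genFun q i n) :=
  (summable_norm_pow_wt hq i n).of_norm.hasSum

theorem genFun_zero (q : ℂ) (i : ℕ) : genFun q i 0 = 1 := by
  let empty : {p : StrictPartition // p.length = 0} := ⟨⟨[], by simp, by simp⟩, rfl⟩
  rw [genFun, tsum_eq_single empty fun p hp =>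
    (hp (Subtype.ext (ext_parts (List.length_eq_zero_iff.1 p.2)))).elim]
  simp [empty, wt]

theorem genFun_add_two (q : ℂ) (i n : ℕ) : genFun q (i + 2) n = genFun q i n := by
  simp [genFun, wt_eq_weight, weight_add_two]

theorem genFun_succ {q : ℂ} (hq : ‖q‖ < 1) (i n : ℕ) :
    genFun q i (n + 1) =
      q ^ ((3 * (n + 1) + (i + 1) % 2) / 2) * (genFun q (i + 1) (n + 1) + genFun q (i + 1) n) := by
  refine HasSum.tsum_eq ?_
  rw [mul_add, ← (columnEquiv n).hasSum_iff]
  refine HasSum.sum ((hasSum_genFun hq (i + 1) (n + 1)).mul_left _ |>.congr_fun fun p => ?_)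
    ((hasSum_genFun hq (i + 1) n).mul_left _ |>.congr_fun fun p => ?_)
  · simp [columnEquiv, wt_addCol, p.2, pow_add, mul_comm]
  · simp [columnEquiv, wt_addColOne, p.2, pow_add, mul_comm]

theorem genFun_mul_qPochhammer_succ {q : ℂ} (hq : ‖q‖ < 1) (i n : ℕ) :
    genFun q i (n + 1) * qPochhammer (q ^ 3) (q ^ 3) (n + 1) =
      q ^ (3 * n + 3) * (genFun q i n * qPochhammer (q ^ 3) (q ^ 3) n)
      + q ^ ((3 * n + 3 + (i + 1) % 2) / 2)
        * (genFun q (i + 1) n * qPochhammer (q ^ 3) (q ^ 3) n) := by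
  have h1 := genFun_succ hq i n
  have h2 := genFun_succ hq (i + 1) n
  simp only [show i + 1 + 1 = i + 2 from rfl, genFun_add_two] at h2
  rw [show 3 * (n + 1) = 3 * n + 3 by ring] at h1 h2
  have hexp : q ^ ((3 * n + 3 + (i + 1) % 2) / 2) * q ^ ((3 * n + 3 + (i + 2) % 2) / 2) =
      q ^ (3 * n + 3) := by
    rw [← pow_add]; congr 1; omega
  rw [qPochhammer_succ]
  linear_combination qPochhammer (q ^ 3) (q ^ 3) n * h1
    + q ^ ((3 * n + 3 + (i + 1) % 2) / 2) * qPochhammer (q ^ 3) (q ^ 3) n * h2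
    + (genFun q i (n + 1) + genFun q i n) * qPochhammer (q ^ 3) (q ^ 3) n * hexp

theorem solvesRecurrence_genFun_mul_qPochhammer {q : ℂ} (hq : ‖q‖ < 1) :
    SolvesRecurrence q (fun k => genFun q 1 k.toNat * qPochhammer (q ^ 3) (q ^ 3) k.toNat) := by
  refine solvesRecurrence_of_coupled (F := fun k => genFun q 1 k * qPochhammer (q ^ 3) (q ^ 3) k)
    (G := fun k => genFun q 2 k * qPochhammer (q ^ 3) (q ^ 3) k) (fun k => ?_) (fun k => ?_)
    (by simp [genFun_zero])
  · simpa using genFun_mul_qPochhammer_succ hq 1 k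
  · simpa [genFun_add_two] using genFun_mul_qPochhammer_succ hq 2 k

theorem genFun_one_one_mul_qPochhammer {q : ℂ} (hq : ‖q‖ < 1) :
    genFun q 1 1 * qPochhammer (q ^ 3) (q ^ 3) 1 = q + q ^ 3 := by
  simpa [genFun_zero, qPochhammer, add_comm] using genFun_mul_qPochhammer_succ hq 1 0

end StrictPartition

open StrictPartition

open Polynomial

theorem fixed_length_generating_function_one_general
    (q : ℂ) (hq : ‖q‖ < 1)
    (c : ℤ → Polynomial ℤ)
    (hc0 : c 0 = 1) (hc1 : c 1 = X + X ^ 3)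
    (hrec : ∀ n : ℕ, c ((n : ℤ) + 2) =
      -X ^ (3 * n + 3) * (1 - X ^ 3) * c ((n : ℤ) + 1)
      + X ^ (3 * n + 4) * (1 + X + 2 * X ^ (3 * n + 2)) * c (n : ℤ)
      - X ^ (6 * n + 3) * (1 - X ^ 3) * (1 - X ^ (3 * n)) * c ((n : ℤ) - 1)
      - X ^ (6 * n + 3) * (1 - X ^ (3 * n)) * (1 - X ^ (3 * n - 3)) * c ((n : ℤ) - 2)) :
    ∀ n : ℕ,
      Summable (fun p : {p : StrictPartition // p.length = n} => ‖(q : ℂ) ^ p.1.wt 1‖) ∧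
      (∑' p : {p : StrictPartition // p.length = n}, q ^ p.1.wt 1) =
        (aeval q (c (n : ℤ))) / ∏ j ∈ Finset.range n, (1 - q ^ 3 * (q ^ 3) ^ j) := by
  have hc : SolvesRecurrence q (fun k => aeval q (c k)) := by
    have := (show SolvesRecurrence (X : ℤ[X]) c from hrec).map (aeval q)
    rwa [aeval_X] at this
  have hq3 : ‖q ^ 3‖ < 1 := by
    rw [norm_pow]; exact pow_lt_one₀ (norm_nonneg q) hq (by norm_num)
  intro n
  refine ⟨summable_norm_pow_wt hq 1 n, (eq_div_iff (qPochhammer_ne_zero hq3 hq3.le n)).2 ?_⟩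
  have key := hc.eq_of_initial_eq (solvesRecurrence_genFun_mul_qPochhammer hq)
    (by simp [hc0, qPochhammer, genFun_zero]) (by simp [hc1, genFun_one_one_mul_qPochhammer hq]) n
  simp only [Int.toNat_natCast] at key
  exact key.symm

/-- **Fixed-length generating function, `i = 1`.**
For `|q| < 1` and the polynomial sequence `c = c^{(1)}` (indexed by `ℤ`) defined by
`c (-2) = c (-1) = 0`, `c 0 = 1`, `c 1 = q + q^3` and the fourth order recurrence below,
the series `∑_{λ ∈ STR, ℓ(λ) = n} q^{|λ|₁}` converges absolutely and equals
`c n (q) / (q³;q³)_n` for every `n ≥ 0`.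
(For `n = 0` the last term of the recurrence vanishes because of the factor `1 - q^{3n}`,
so the truncated natural subtraction in the exponent `3*n - 3` is harmless.) -/
theorem fixed_length_generating_function_one
    (q : ℂ) (hq : ‖q‖ < 1)
    (c : ℤ → Polynomial ℤ)
    (hcm2 : c (-2) = 0) (hcm1 : c (-1) = 0)
    (hc0 : c 0 = 1) (hc1 : c 1 = X + X ^ 3)
    (hrec : ∀ n : ℕ, c ((n : ℤ) + 2) =
      -X ^ (3 * n + 3) * (1 - X ^ 3) * c ((n : ℤ) + 1)
      + X ^ (3 * n + 4) * (1 + X + 2 * X ^ (3 * n + 2)) * c (n : ℤ)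
      - X ^ (6 * n + 3) * (1 - X ^ 3) * (1 - X ^ (3 * n)) * c ((n : ℤ) - 1)
      - X ^ (6 * n + 3) * (1 - X ^ (3 * n)) * (1 - X ^ (3 * n - 3)) * c ((n : ℤ) - 2)) :
    ∀ n : ℕ,
      Summable (fun p : {p : StrictPartition // p.length = n} => ‖(q : ℂ) ^ p.1.wt 1‖) ∧
      (∑' p : {p : StrictPartition // p.length = n}, q ^ p.1.wt 1) =
        (aeval q (c (n : ℤ))) / ∏ j ∈ Finset.range n, (1 - q ^ 3 * (q ^ 3) ^ j) :=
  fixed_length_generating_function_one_general q hq c hc0 hc1 hrec
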